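/- Under the assumptions of the previous self-concordance lemma (|g'''(t)| ≤ S·g''(t)/(1−St) on [0,1/S), g convex, g''(0) > 0), one has for all 0 ≤ t ≤ 1/S the two-sided bound (t²/2 − S t³/6)·g''(0) ≤ g(t) − g(0) − g'(0)·t ≤ ((St + (1−St)·log(1−St))/S²)·g''(0). -/

import Mathlib

/-!
From `|g'''| ≤ S g'' / (1 - S t)` the derivative of `g''(t) (1 - S t)` is `≤ 0` and that of
`g''(t) / (1 - S t)` is `≥ 0`, whence `g''(0) (1 - S t) ≤ g''(t) ≤ g''(0) / (1 - S t)`.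
Integrating these bounds twice from `0` gives the two inequalities; the upper one survives at
`t = 1/S` because `u log u` is continuous at `0`.
-/

open Set

theorem Convex.sub_le_sub_of_hasDerivAt_le {D : Set ℝ} (hD : Convex ℝ D)
    {f g f' g' : ℝ → ℝ} (hf' : ∀ x ∈ interior D, HasDerivAt f (f' x) x)
    (hg' : ∀ x ∈ interior D, HasDerivAt g (g' x) x)
    (hf : ContinuousOn f D) (hg : ContinuousOn g D)
    (hle : ∀ x ∈ interior D, f' x ≤ g' x) {x y : ℝ} (hx : x ∈ D) (hy : y ∈ D) (hxy : x ≤ y) :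
    f y - f x ≤ g y - g x := by
  have hmono : MonotoneOn (g - f) D :=
    monotoneOn_of_hasDerivWithinAt_nonneg hD (hg.sub hf)
      (fun z hz ↦ ((hg' z hz).sub (hf' z hz)).hasDerivWithinAt)
      fun z hz ↦ sub_nonneg.2 (hle z hz)
  have := hmono hx hy hxy
  simp only [Pi.sub_apply] at this
  linarith

theorem DifferentiableOn.hasDerivAt_derivWithin_Icc {f : ℝ → ℝ} {a b : ℝ}
    (hf : DifferentiableOn ℝ f (Icc a b)) :
    ∀ x ∈ Ioo a b, HasDerivAt f (derivWithin f (Icc a b) x) x := fun x hx ↦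
  (hf x (Ioo_subset_Icc_self hx)).hasDerivWithinAt.hasDerivAt (Icc_mem_nhds hx.1 hx.2)

theorem one_sub_mul_pos {S x : ℝ} (hS : 0 < S) (hx : x < 1 / S) : 0 < 1 - S * x := by
  rw [lt_div_iff₀ hS] at hx
  linarith

theorem hasDerivAt_one_sub_mul (S x : ℝ) : HasDerivAt (fun y ↦ 1 - S * y) (-S) x := by
  simpa using ((hasDerivAt_id x).const_mul S).const_sub 1

section SelfConcordant

variable {S : ℝ} {u u' : ℝ → ℝ}

theorem apply_mul_one_sub_le_of_abs_deriv_le (hS : 0 < S) (hu : ContinuousOn u (Icc 0 (1 / S)))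
    (hu' : ∀ x ∈ Ioo 0 (1 / S), HasDerivAt u (u' x) x)
    (hsc : ∀ x ∈ Ioo 0 (1 / S), |u' x| ≤ S * u x / (1 - S * x)) {x : ℝ}
    (hx : x ∈ Icc 0 (1 / S)) :
    u x * (1 - S * x) ≤ u 0 := by
  have hderiv : ∀ y ∈ interior (Icc 0 (1 / S)), HasDerivAt (fun z ↦ u z * (1 - S * z))
      (u' y * (1 - S * y) + u y * -S) y := by
    rw [interior_Icc]
    exact fun y hy ↦ (hu' y hy).mul (hasDerivAt_one_sub_mul S y)
  have hnonpos : ∀ y ∈ interior (Icc 0 (1 / S)), u' y * (1 - S * y) + u y * -S ≤ 0 := by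
    rw [interior_Icc]
    intro y hy
    have := (le_div_iff₀ (one_sub_mul_pos hS hy.2)).1 ((le_abs_self _).trans (hsc y hy))
    linarith
  simpa using (convex_Icc 0 (1 / S)).sub_le_sub_of_hasDerivAt_le
    hderiv (fun y _ ↦ hasDerivAt_const y (u 0)) (hu.mul (by fun_prop)) continuousOn_const hnonpos
    (left_mem_Icc.2 (by positivity)) hx hx.1

theorem mul_one_sub_le_apply_of_abs_deriv_le (hS : 0 < S) (hu : ContinuousOn u (Icc 0 (1 / S)))
    (hu' : ∀ x ∈ Ioo 0 (1 / S), HasDerivAt u (u' x) x)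
    (hsc : ∀ x ∈ Ioo 0 (1 / S), |u' x| ≤ S * u x / (1 - S * x)) {x : ℝ}
    (hx : x ∈ Ico 0 (1 / S)) :
    u 0 * (1 - S * x) ≤ u x := by
  have hpos : ∀ y ∈ Ico 0 (1 / S), 0 < 1 - S * y := fun y hy ↦ one_sub_mul_pos hS hy.2
  have hderiv : ∀ y ∈ interior (Ico 0 (1 / S)), HasDerivAt (fun z ↦ u z / (1 - S * z))
      ((u' y * (1 - S * y) - u y * -S) / (1 - S * y) ^ 2) y := by
    rw [interior_Ico]
    exact fun y hy ↦
      (hu' y hy).div (hasDerivAt_one_sub_mul S y) (hpos y (Ioo_subset_Ico_self hy)).ne'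
  have hnonneg : ∀ y ∈ interior (Ico 0 (1 / S)),
      0 ≤ (u' y * (1 - S * y) - u y * -S) / (1 - S * y) ^ 2 := by
    rw [interior_Ico]
    intro y hy
    have := (le_div_iff₀ (one_sub_mul_pos hS hy.2)).1 ((neg_le_abs _).trans (hsc y hy))
    exact div_nonneg (by linarith) (sq_nonneg _)
  have key := (convex_Ico 0 (1 / S)).sub_le_sub_of_hasDerivAt_le
    (fun y _ ↦ hasDerivAt_const y (u 0)) hderiv continuousOn_const
    ((hu.mono Ico_subset_Icc_self).div (by fun_prop) fun y hy ↦ (hpos y hy).ne') hnonneg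
    (left_mem_Ico.2 (by positivity)) hx hx.1
  simp only [sub_self, mul_zero, sub_zero, div_one] at key
  exact (le_div_iff₀ (hpos x hx)).1 (by linarith)

variable {f f' f'' f''' : ℝ → ℝ}

theorem mul_le_taylor_remainder_of_abs_deriv_le (hS : 0 < S)
    (hf : ContinuousOn f (Icc 0 (1 / S))) (hf' : ContinuousOn f' (Icc 0 (1 / S)))
    (hf'' : ContinuousOn f'' (Icc 0 (1 / S)))
    (hd : ∀ x ∈ Ioo 0 (1 / S), HasDerivAt f (f' x) x)
    (hd' : ∀ x ∈ Ioo 0 (1 / S), HasDerivAt f' (f'' x) x)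
    (hd'' : ∀ x ∈ Ioo 0 (1 / S), HasDerivAt f'' (f''' x) x)
    (hsc : ∀ x ∈ Ioo 0 (1 / S), |f''' x| ≤ S * f'' x / (1 - S * x)) {x : ℝ}
    (hx : x ∈ Icc 0 (1 / S)) :
    (x ^ 2 / 2 - S * x ^ 3 / 6) * f'' 0 ≤ f x - f 0 - f' 0 * x := by
  have hI : Convex ℝ (Icc 0 (1 / S)) := convex_Icc 0 (1 / S)
  have h0 : (0 : ℝ) ∈ Icc 0 (1 / S) := left_mem_Icc.2 (by positivity)
  have hf'_lower : ∀ y ∈ Icc 0 (1 / S), (y - S * y ^ 2 / 2) * f'' 0 ≤ f' y - f' 0 := by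
    intro y hy
    have hquad : ∀ z ∈ interior (Icc 0 (1 / S)),
        HasDerivAt (fun z ↦ (z - S * z ^ 2 / 2) * f'' 0) (f'' 0 * (1 - S * z)) z := fun z _ ↦
      (((hasDerivAt_id z).sub (((hasDerivAt_pow 2 z).const_mul S).div_const 2)).mul_const
        (f'' 0)).congr_deriv (by simp; ring)
    simpa using hI.sub_le_sub_of_hasDerivAt_le hquad (by rwa [interior_Icc]) (by fun_prop) hf'
      (fun z hz ↦ mul_one_sub_le_apply_of_abs_deriv_le hS hf'' hd'' hsc
        (Ioo_subset_Ico_self (by rwa [interior_Icc] at hz))) h0 hy hy.1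
  have hcubic : ∀ z ∈ interior (Icc 0 (1 / S)),
      HasDerivAt (fun z ↦ (z ^ 2 / 2 - S * z ^ 3 / 6) * f'' 0) ((z - S * z ^ 2 / 2) * f'' 0) z :=
    fun z _ ↦ ((((hasDerivAt_pow 2 z).div_const 2).sub
      (((hasDerivAt_pow 3 z).const_mul S).div_const 6)).mul_const (f'' 0)).congr_deriv (by ring)
  have hlin : ∀ z ∈ interior (Icc 0 (1 / S)),
      HasDerivAt (fun z ↦ f z - f' 0 * z) (f' z - f' 0) z := by
    rw [interior_Icc]
    exact fun z hz ↦ (hd z hz).sub (by simpa using (hasDerivAt_id z).const_mul (f' 0))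
  have := hI.sub_le_sub_of_hasDerivAt_le hcubic hlin (by fun_prop) (hf.sub (by fun_prop))
    (fun z hz ↦ hf'_lower z (interior_subset hz)) h0 hx hx.1
  simp only [ne_eq, OfNat.ofNat_ne_zero, not_false_eq_true, zero_pow, zero_div, mul_zero,
    sub_self, zero_mul, sub_zero] at this
  linarith

theorem taylor_remainder_le_of_abs_deriv_le (hS : 0 < S)
    (hf : ContinuousOn f (Icc 0 (1 / S))) (hf' : ContinuousOn f' (Icc 0 (1 / S)))
    (hf'' : ContinuousOn f'' (Icc 0 (1 / S)))
    (hd : ∀ x ∈ Ioo 0 (1 / S), HasDerivAt f (f' x) x)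
    (hd' : ∀ x ∈ Ioo 0 (1 / S), HasDerivAt f' (f'' x) x)
    (hd'' : ∀ x ∈ Ioo 0 (1 / S), HasDerivAt f'' (f''' x) x)
    (hsc : ∀ x ∈ Ioo 0 (1 / S), |f''' x| ≤ S * f'' x / (1 - S * x)) {x : ℝ}
    (hx : x ∈ Icc 0 (1 / S)) :
    f x - f 0 - f' 0 * x ≤ ((S * x + (1 - S * x) * Real.log (1 - S * x)) / S ^ 2) * f'' 0 := by
  have hpos : ∀ y ∈ Ioo 0 (1 / S), 0 < 1 - S * y := fun y hy ↦ one_sub_mul_pos hS hy.2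
  have hf'_upper : ∀ y ∈ Ico 0 (1 / S), f' y - f' 0 ≤ -Real.log (1 - S * y) / S * f'' 0 := by
    intro y hy
    have hlog : ∀ z ∈ interior (Ico 0 (1 / S)),
        HasDerivAt (fun z ↦ -Real.log (1 - S * z) / S * f'' 0) (f'' 0 / (1 - S * z)) z := by
      rw [interior_Ico]
      intro z hz
      refine ((((hasDerivAt_one_sub_mul S z).log (hpos z hz).ne').neg.div_const S).mul_const
        (f'' 0)).congr_deriv ?_
      field_simp [hS.ne', (hpos z hz).ne']
    have hbound : ∀ z ∈ interior (Ico 0 (1 / S)), f'' z ≤ f'' 0 / (1 - S * z) := by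
      rw [interior_Ico]
      exact fun z hz ↦ (le_div_iff₀ (hpos z hz)).2
        (apply_mul_one_sub_le_of_abs_deriv_le hS hf'' hd'' hsc (Ioo_subset_Icc_self hz))
    have hcont : ContinuousOn (fun z ↦ -Real.log (1 - S * z) / S * f'' 0) (Ico 0 (1 / S)) :=
      ((ContinuousOn.log (by fun_prop) fun z hz ↦ (one_sub_mul_pos hS hz.2).ne').neg.div_const
        S).mul_const _
    simpa using (convex_Ico 0 (1 / S)).sub_le_sub_of_hasDerivAt_le
      (by rwa [interior_Ico]) hlog (hf'.mono Ico_subset_Icc_self) hcont hbound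
      (left_mem_Ico.2 (by positivity)) hy hy.1
  have hlin : ∀ z ∈ interior (Icc 0 (1 / S)),
      HasDerivAt (fun z ↦ f z - f' 0 * z) (f' z - f' 0) z := by
    rw [interior_Icc]
    exact fun z hz ↦ (hd z hz).sub (by simpa using (hasDerivAt_id z).const_mul (f' 0))
  have hent : ∀ z ∈ interior (Icc 0 (1 / S)),
      HasDerivAt (fun z ↦ (S * z + (1 - S * z) * Real.log (1 - S * z)) / S ^ 2 * f'' 0)
        (-Real.log (1 - S * z) / S * f'' 0) z := by
    rw [interior_Icc]
    intro z hz
    have hml := (Real.hasDerivAt_mul_log (hpos z hz).ne').comp z (hasDerivAt_one_sub_mul S z)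
    refine (((((hasDerivAt_id z).const_mul S).add hml).div_const (S ^ 2)).mul_const
      (f'' 0)).congr_deriv ?_
    field_simp
    ring
  have hcont : ContinuousOn
      (fun z ↦ (S * z + (1 - S * z) * Real.log (1 - S * z)) / S ^ 2 * f'' 0) (Icc 0 (1 / S)) :=
    Continuous.continuousOn (by fun_prop)
  have := (convex_Icc 0 (1 / S)).sub_le_sub_of_hasDerivAt_le hlin hent (hf.sub (by fun_prop))
    hcont (fun z hz ↦ hf'_upper z (Ioo_subset_Ico_self (by rwa [interior_Icc] at hz)))
    (left_mem_Icc.2 (by positivity)) hx hx.1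
  simp only [mul_zero, sub_zero, Real.log_one, add_zero, zero_div, zero_mul] at this
  linarith

end SelfConcordant

theorem stmt_5_general (g : ℝ → ℝ) (S : ℝ) (hS : 0 < S)
    (hg : ContDiffOn ℝ 3 g (Set.Icc 0 (1 / S)))
    (hsc : ∀ t : ℝ, 0 ≤ t → t < 1 / S →
      |iteratedDerivWithin 3 g (Set.Icc 0 (1 / S)) t| ≤
        S * iteratedDerivWithin 2 g (Set.Icc 0 (1 / S)) t / (1 - S * t)) :
    ∀ t ∈ Set.Icc (0:ℝ) (1 / S),
      (t ^ 2 / 2 - S * t ^ 3 / 6) * iteratedDerivWithin 2 g (Set.Icc 0 (1 / S)) 0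
        ≤ g t - g 0 - iteratedDerivWithin 1 g (Set.Icc 0 (1 / S)) 0 * t ∧
      g t - g 0 - iteratedDerivWithin 1 g (Set.Icc 0 (1 / S)) 0 * t
        ≤ ((S * t + (1 - S * t) * Real.log (1 - S * t)) / S ^ 2) *
          iteratedDerivWithin 2 g (Set.Icc 0 (1 / S)) 0 := by
  set I := Icc (0 : ℝ) (1 / S)
  have hI : UniqueDiffOn ℝ I := uniqueDiffOn_Icc (by positivity)
  have hg' : ContDiffOn ℝ 2 (derivWithin g I) I := hg.derivWithin hI (by norm_num)
  have hg'' : ContDiffOn ℝ 1 (derivWithin (derivWithin g I) I) I :=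
    hg'.derivWithin hI (by norm_num)
  have hiter2 : iteratedDerivWithin 2 g I = derivWithin (derivWithin g I) I := by
    rw [iteratedDerivWithin_succ', iteratedDerivWithin_one]
  have hiter3 : iteratedDerivWithin 3 g I = derivWithin (derivWithin (derivWithin g I) I) I := by
    rw [iteratedDerivWithin_succ', iteratedDerivWithin_succ', iteratedDerivWithin_one]
  rw [hiter2, hiter3] at hsc
  rw [hiter2, iteratedDerivWithin_one]
  have hd := (hg.differentiableOn (by norm_num)).hasDerivAt_derivWithin_Icc
  have hd' := (hg'.differentiableOn (by norm_num)).hasDerivAt_derivWithin_Icc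
  have hd'' := (hg''.differentiableOn one_ne_zero).hasDerivAt_derivWithin_Icc
  intro t ht
  exact ⟨mul_le_taylor_remainder_of_abs_deriv_le hS hg.continuousOn hg'.continuousOn
      hg''.continuousOn hd hd' hd'' (fun x hx ↦ hsc x hx.1.le hx.2) ht,
    taylor_remainder_le_of_abs_deriv_le hS hg.continuousOn hg'.continuousOn
      hg''.continuousOn hd hd' hd'' (fun x hx ↦ hsc x hx.1.le hx.2) ht⟩

/-- Lemma (mine-1d), full two-sided Taylor bracketing on [0, 1/S].
At t = 1/S the term (1−St)·log(1−St) equals 0 (Real.log 0 = 0 in Lean). -/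
theorem stmt_5 (g : ℝ → ℝ) (S : ℝ) (hS : 0 < S)
    (hg : ContDiffOn ℝ 3 g (Set.Icc 0 (1 / S)))
    (hconv : ConvexOn ℝ (Set.Icc 0 (1 / S)) g)
    (h0 : 0 < iteratedDerivWithin 2 g (Set.Icc 0 (1 / S)) 0)
    (hsc : ∀ t : ℝ, 0 ≤ t → t < 1 / S →
      |iteratedDerivWithin 3 g (Set.Icc 0 (1 / S)) t| ≤
        S * iteratedDerivWithin 2 g (Set.Icc 0 (1 / S)) t / (1 - S * t)) :
    ∀ t ∈ Set.Icc (0:ℝ) (1 / S),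
      (t ^ 2 / 2 - S * t ^ 3 / 6) * iteratedDerivWithin 2 g (Set.Icc 0 (1 / S)) 0
        ≤ g t - g 0 - iteratedDerivWithin 1 g (Set.Icc 0 (1 / S)) 0 * t ∧
      g t - g 0 - iteratedDerivWithin 1 g (Set.Icc 0 (1 / S)) 0 * t
        ≤ ((S * t + (1 - S * t) * Real.log (1 - S * t)) / S ^ 2) *
          iteratedDerivWithin 2 g (Set.Icc 0 (1 / S)) 0 :=
  stmt_5_general g S hS hg hsc
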